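/- arXiv:2507.14080 — 3 statements merged into one kernel-verified Lean document; each statement's English description precedes it below -/
import Mathlib

section
/- Parallel composition preserves refinement: if specification C₁ refines A₁ via r₁ and C₂ refines A₂ via r₂, then the parallel composition C₁ ⊗ C₂ refines A₁ ⊗ A₂ via the product refinement function (r₁ × r₂). -/
/-- A specification over states `S`, transitions `T`, and task set `F`. -/
structure Spec (S T F : Type*) where
  Init : S → Prop
  Next : S → T → S
  Inv : S → T → Prop
  Fair : F → S → T → Prop

/-- An execution `(s, t)` conforms to a specification. -/
def Conforms {S T F : Type*} (sp : Spec S T F) (s : ℕ → S) (t : ℕ → T) : Prop :=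
  sp.Init (s 0) ∧
  (∀ i, sp.Next (s i) (t i) = s (i + 1)) ∧
  (∀ i, sp.Inv (s i) (t i)) ∧
  (∀ f : F, ∀ i : ℕ, ∃ j ≥ i, sp.Fair f (s j) (t j))

/-- `r` witnesses that concrete spec `C` refines abstract spec `A`:
the elementwise image under `r` of every conforming execution conforms. -/
def Refines {SC TC FC SA TA FA : Type*} (C : Spec SC TC FC) (A : Spec SA TA FA)
    (r : SC × TC → SA × TA) : Prop :=
  ∀ s t, Conforms C s t →
    Conforms A (fun i => (r (s i, t i)).1) (fun i => (r (s i, t i)).2)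

/-- Parallel composition `Spec₁ ⊗ Spec₂` of two specifications. -/
def prodSpec {S1 T1 F1 S2 T2 F2 : Type*}
    (sp1 : Spec S1 T1 F1) (sp2 : Spec S2 T2 F2) :
    Spec (S1 × S2) (T1 × T2) (F1 ⊕ F2) where
  Init s := sp1.Init s.1 ∧ sp2.Init s.2
  Next s t := (sp1.Next s.1 t.1, sp2.Next s.2 t.2)
  Inv s t := sp1.Inv s.1 t.1 ∧ sp2.Inv s.2 t.2
  Fair f s t :=
    match f with
    | Sum.inl f1 => sp1.Fair f1 s.1 t.1
    | Sum.inr f2 => sp2.Fair f2 s.2 t.2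

/-- Parallel composition preserves refinement. -/
theorem prod_refines {S1 T1 F1 S2 T2 F2 SA1 TA1 FA1 SA2 TA2 FA2 : Type*}
    (C1 : Spec S1 T1 F1) (C2 : Spec S2 T2 F2)
    (A1 : Spec SA1 TA1 FA1) (A2 : Spec SA2 TA2 FA2)
    (r1 : S1 × T1 → SA1 × TA1) (r2 : S2 × T2 → SA2 × TA2)
    (h1 : Refines C1 A1 r1) (h2 : Refines C2 A2 r2) :
    Refines (prodSpec C1 C2) (prodSpec A1 A2)
      (fun p =>
        (((r1 (p.1.1, p.2.1)).1, (r2 (p.1.2, p.2.2)).1),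
         ((r1 (p.1.1, p.2.1)).2, (r2 (p.1.2, p.2.2)).2))) := by
  intro s t hc
  obtain ⟨⟨hi1, hi2⟩, hn, hinv, hf⟩ := hc
  have hc1 : Conforms C1 (fun i => (s i).1) (fun i => (t i).1) :=
    ⟨hi1, fun i => congrArg Prod.fst (hn i), fun i => (hinv i).1,
     fun f i => by obtain ⟨j, hj, hfair⟩ := hf (Sum.inl f) i; exact ⟨j, hj, hfair⟩⟩
  have hc2 : Conforms C2 (fun i => (s i).2) (fun i => (t i).2) :=
    ⟨hi2, fun i => congrArg Prod.snd (hn i), fun i => (hinv i).2,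
     fun f i => by obtain ⟨j, hj, hfair⟩ := hf (Sum.inr f) i; exact ⟨j, hj, hfair⟩⟩
  obtain ⟨a1i, a1n, a1inv, a1f⟩ := h1 _ _ hc1
  obtain ⟨a2i, a2n, a2inv, a2f⟩ := h2 _ _ hc2
  refine ⟨⟨a1i, a2i⟩, fun i => ?_, fun i => ⟨a1inv i, a2inv i⟩, fun f i => ?_⟩
  · exact Prod.ext (a1n i) (a2n i)
  · cases f with
    | inl f => obtain ⟨j, hj, hfair⟩ := a1f f i; exact ⟨j, hj, hfair⟩
    | inr f => obtain ⟨j, hj, hfair⟩ := a2f f i; exact ⟨j, hj, hfair⟩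
end

section
/- Strengthening a parallel composition with a protocol invariant preserves refinement: if C₁ ⊗ C₂ strengthened by a protocol invariant P_C : T₁ × T₂ → Prop refines A₁ ⊗ A₂, and every concrete transition pair satisfying P_C maps under the refinement functions to an abstract transition pair satisfying P_A, then (C₁ ⊗ C₂ strengthened by P_C) refines (A₁ ⊗ A₂ strengthened by P_A). -/
/-- Strengthening a composed specification by a protocol invariant
`P : T₁ → T₂ → Prop`: the invariant becomes `Inv₁ ∧ Inv₂ ∧ P`. -/
def strengthen {S1 T1 S2 T2 F : Type*}
    (sp : Spec (S1 × S2) (T1 × T2) F) (P : T1 → T2 → Prop) :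
    Spec (S1 × S2) (T1 × T2) F :=
  { sp with Inv := fun s t => sp.Inv s t ∧ P t.1 t.2 }

/-- Strengthening a parallel composition with a protocol invariant
preserves refinement. -/
theorem strengthen_refines {S1 T1 F1 S2 T2 F2 SA1 TA1 FA1 SA2 TA2 FA2 : Type*}
    (C1 : Spec S1 T1 F1) (C2 : Spec S2 T2 F2)
    (A1 : Spec SA1 TA1 FA1) (A2 : Spec SA2 TA2 FA2)
    (PC : T1 → T2 → Prop) (PA : TA1 × TA2 → Prop)
    (r : (S1 × S2) × (T1 × T2) → (SA1 × SA2) × (TA1 × TA2))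
    (href : Refines (strengthen (prodSpec C1 C2) PC) (prodSpec A1 A2) r)
    (hP : ∀ sc : S1 × S2, ∀ tc : T1 × T2, PC tc.1 tc.2 → PA (r (sc, tc)).2) :
    Refines (strengthen (prodSpec C1 C2) PC)
      (strengthen (prodSpec A1 A2) (fun ta1 ta2 => PA (ta1, ta2))) r := by
  intro s t hc
  obtain ⟨hi, hn, hinv, hf⟩ := href s t hc
  exact ⟨hi, hn, fun i => ⟨hinv i, hP _ _ (hc.2.2.1 i).2⟩, hf⟩
end

section
/- Weak fairness encoding is machine-closed in the following sense: every finite prefix (s₀, t₀), ..., (s_k, t_k) satisfying Init(s₀), Next(s_i, t_i) = s_{i+1} for i < k can be extended to an infinite execution conforming to the terminal specification, provided that from every state some transition exists and the task set is countable and from every state, for each task f, either some transition t satisfies WeakFair(f, s, t) or no transition does. -/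
/-- Fairness induced by a terminal specification:
`Fair(f,s,t) = WeakFair(f,s,t) ∨ ∀ t', ¬WeakFair(f,s,t')`. -/
def TerminalFair {S T F : Type*} (WeakFair : F → S → T → Prop)
    (f : F) (s : S) (t : T) : Prop :=
  WeakFair f s t ∨ ∀ t' : T, ¬ WeakFair f s t'

open Classical in
noncomputable def pickT {S T F : Type*} [Nonempty T] (WeakFair : F → S → T → Prop)
    (of : Option F) (st : S) : T :=
  match of with
  | none => Classical.arbitrary T
  | some f => if h : ∃ t, WeakFair f st t then h.choose else Classical.arbitrary T

lemma pickT_fair {S T F : Type*} [Nonempty T] (WeakFair : F → S → T → Prop)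
    (f : F) (st : S) : TerminalFair WeakFair f st (pickT WeakFair (some f) st) := by
  unfold TerminalFair
  by_cases h : ∃ t, WeakFair f st t
  · left; simpa [pickT, h] using h.choose_spec
  · right; push_neg at h; exact h

noncomputable def tailS {S T : Type*} (Next : S → T → S) (pick : ℕ → S → T) (s0 : S) : ℕ → S
  | 0 => s0
  | (m+1) => Next (tailS Next pick s0 m) (pick m (tailS Next pick s0 m))

/-- Machine closure of the weak fairness encoding: every finite
prefix consistent with `Init` and `Next` extends to an infinite execution
conforming to the terminal specification, provided `T` is nonempty, the task
set `F` is countable, and from every state each task's weak fairness is either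
satisfiable by some transition or by none. -/
theorem terminal_machine_closed {S T F : Type*} [Nonempty T] [Countable F]
    (Init : S → Prop) (Next : S → T → S) (WeakFair : F → S → T → Prop)
    (hdec : ∀ (s : S) (f : F), (∃ t : T, WeakFair f s t) ∨ ¬ ∃ t : T, WeakFair f s t)
    (k : ℕ) (s : Fin (k + 1) → S) (t : Fin (k + 1) → T)
    (hinit : Init (s 0))
    (hnext : ∀ i : Fin (k + 1), ∀ h : (i : ℕ) < k,
      Next (s i) (t i) = s ⟨(i : ℕ) + 1, by omega⟩) :
    ∃ (s' : ℕ → S) (t' : ℕ → T),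
      (∀ i : Fin (k + 1), s' (i : ℕ) = s i ∧ t' (i : ℕ) = t i) ∧
      Init (s' 0) ∧
      (∀ i : ℕ, Next (s' i) (t' i) = s' (i + 1)) ∧
      (∀ f : F, ∀ i : ℕ, ∃ j ≥ i, TerminalFair WeakFair f (s' j) (t' j)) := by
  obtain ⟨e, he⟩ := exists_surjective_nat (Option F)
  set pick : ℕ → S → T := fun m st => pickT WeakFair (e (Nat.unpair (k + 1 + m)).1) st with hpick
  set q : ℕ → S := tailS Next pick (Next (s (Fin.last k)) (t (Fin.last k))) with hq
  refine ⟨fun n => if h : n ≤ k then s ⟨n, by omega⟩ else q (n - (k+1)),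
          fun n => if h : n ≤ k then t ⟨n, by omega⟩
                   else pickT WeakFair (e (Nat.unpair n).1)
                     (q (n - (k+1))),
          ?_, ?_, ?_, ?_⟩
  · intro i
    have hi : (i : ℕ) ≤ k := by omega
    constructor <;> simp [hi]
  · simpa [show (0:ℕ) ≤ k by omega] using hinit
  · intro i
    by_cases hik : i + 1 ≤ k
    · have hi : i ≤ k := by omega
      simp only [hi, hik, dif_pos]
      exact hnext ⟨i, by omega⟩ (by simp only [Fin.val_mk]; omega)
    · by_cases hik' : i ≤ k
      · -- i = k
        have hik2 : i = k := by omega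
        simp only [hik', dif_pos, dif_neg hik]
        subst hik2
        have : i + 1 - (i + 1) = 0 := by omega
        rw [this]
        show Next (s ⟨i, _⟩) (t ⟨i, _⟩) = q 0
        rw [hq]
        rfl
      · -- i ≥ k+1
        simp only [dif_neg hik', dif_neg hik]
        set m := i - (k+1) with hm
        have h1 : i + 1 - (k + 1) = m + 1 := by omega
        have h2 : k + 1 + m = i := by omega
        rw [h1, hq]
        show Next (tailS Next pick _ m) _ = tailS Next pick _ (m+1)
        rw [show tailS Next pick (Next (s (Fin.last k)) (t (Fin.last k))) (m+1)
              = Next (tailS Next pick _ m) (pick m (tailS Next pick _ m)) from rfl,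
            hpick]
        simp only [h2]
  · intro f i
    obtain ⟨m, hm⟩ := he (some f)
    refine ⟨Nat.pair m (max i (k+1)), ?_, ?_⟩
    · exact le_trans (le_max_left _ _) (Nat.right_le_pair m _)
    · have hj : ¬ (Nat.pair m (max i (k+1)) ≤ k) := by
        have := Nat.right_le_pair m (max i (k+1))
        omega
      simp only [dif_neg hj, Nat.unpair_pair, hm]
      exact pickT_fair WeakFair f _
end
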